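/- The time-slice selection map transforms a uniform variable into the geometric distribution: for b > 1, natural T, and integer k with 0 ≤ k ≤ T, the Lebesgue measure (length) of the set {α ∈ (0,1) : ⌊(T+1)·log_b(α(b-1)+1)⌋ = k} equals P(k) = (b^((k+1)/(T+1)) - b^(k/(T+1)))/(b-1). -/
import Mathlib


open MeasureTheory

/-- The time-slice selection map transforms a uniform variable into the geometric distribution. -/
theorem slice_selection_distribution (T : ℕ) (b : ℝ) (hb : 1 < b) (k : ℕ) (hk : k ≤ T) :
    volume {α : ℝ | α ∈ Set.Ioo (0 : ℝ) 1 ∧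
        ⌊((T : ℝ) + 1) * Real.logb b (α * (b - 1) + 1)⌋ = (k : ℤ)} =
      ENNReal.ofReal
        ((b ^ (((k : ℝ) + 1) / ((T : ℝ) + 1)) - b ^ ((k : ℝ) / ((T : ℝ) + 1))) / (b - 1)) := by
  have hb1 : (0:ℝ) < b - 1 := by linarith
  have hT1 : (0:ℝ) < (T:ℝ) + 1 := by positivity
  set e1 : ℝ := (k:ℝ)/((T:ℝ)+1) with he1
  set e2 : ℝ := ((k:ℝ)+1)/((T:ℝ)+1) with he2
  set l : ℝ := (b ^ e1 - 1)/(b-1) with hl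
  set u : ℝ := (b ^ e2 - 1)/(b-1) with hu
  have h1 : (1:ℝ) ≤ b ^ e1 := Real.one_le_rpow hb.le (by positivity)
  have h12 : b ^ e1 < b ^ e2 :=
    Real.rpow_lt_rpow_left_iff hb |>.mpr (by rw [he1, he2]; gcongr; linarith)
  have h2b : b ^ e2 ≤ b := by
    calc b ^ e2 ≤ b ^ (1:ℝ) := by
          apply (Real.rpow_le_rpow_left_iff hb).mpr
          rw [he2, div_le_one hT1]
          have : (k:ℝ) ≤ (T:ℝ) := by exact_mod_cast hk
          linarith
      _ = b := Real.rpow_one b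
  have hl0 : 0 ≤ l := div_nonneg (by linarith) hb1.le
  have hu1 : u ≤ 1 := by rw [hu, div_le_one hb1]; linarith
  have hlu : l < u := by rw [hl, hu]; gcongr
  set S := {α : ℝ | α ∈ Set.Ioo (0 : ℝ) 1 ∧
        ⌊((T : ℝ) + 1) * Real.logb b (α * (b - 1) + 1)⌋ = (k : ℤ)} with hS
  have hsub1 : Set.Ioo l u ⊆ S := by
    rintro α ⟨hαl, hαu⟩
    have hα0 : 0 < α := lt_of_le_of_lt hl0 hαl
    have hα1 : α < 1 := hαu.trans_le hu1
    have hx0 : 0 < α*(b-1)+1 := by nlinarith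
    refine ⟨⟨hα0, hα1⟩, ?_⟩
    rw [Int.floor_eq_iff]
    push_cast
    constructor
    · have hge : b ^ e1 ≤ α*(b-1)+1 := by
        rw [hl, div_lt_iff₀ hb1] at hαl; linarith
      have hlog : e1 ≤ Real.logb b (α*(b-1)+1) :=
        (Real.le_logb_iff_rpow_le hb hx0).mpr hge
      rw [he1, div_le_iff₀ hT1] at hlog
      nlinarith [hlog]
    · have hlt : α*(b-1)+1 < b ^ e2 := by
        rw [hu, lt_div_iff₀ hb1] at hαu; linarith
      have hlog : Real.logb b (α*(b-1)+1) < e2 :=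
        (Real.logb_lt_iff_lt_rpow hb hx0).mpr hlt
      rw [he2, lt_div_iff₀ hT1] at hlog
      nlinarith [hlog]
  have hsub2 : S ⊆ Set.Ico l u := by
    rintro α ⟨⟨hα0, hα1⟩, hf⟩
    have hx0 : 0 < α*(b-1)+1 := by nlinarith
    rw [Int.floor_eq_iff] at hf
    push_cast at hf
    obtain ⟨hf1, hf2⟩ := hf
    constructor
    · have hlog : e1 ≤ Real.logb b (α*(b-1)+1) := by
        rw [he1, div_le_iff₀ hT1]; nlinarith
      have hge : b ^ e1 ≤ α*(b-1)+1 :=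
        (Real.le_logb_iff_rpow_le hb hx0).mp hlog
      rw [hl, div_le_iff₀ hb1]; linarith
    · have hlog : Real.logb b (α*(b-1)+1) < e2 := by
        rw [he2, lt_div_iff₀ hT1]; nlinarith
      have hlt : α*(b-1)+1 < b ^ e2 :=
        (Real.logb_lt_iff_lt_rpow hb hx0).mp hlog
      rw [hu, lt_div_iff₀ hb1]; linarith
  have hvol : volume S = ENNReal.ofReal (u - l) := by
    apply le_antisymm
    · calc volume S ≤ volume (Set.Ico l u) := measure_mono hsub2
        _ = ENNReal.ofReal (u - l) := Real.volume_Ico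
    · calc ENNReal.ofReal (u - l) = volume (Set.Ioo l u) := Real.volume_Ioo.symm
        _ ≤ volume S := measure_mono hsub1
  rw [hvol]
  congr 1
  rw [hu, hl, div_sub_div_same]
  ring
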